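/- On the Lie algebroid Â = p*A ⊕ Vp with anchor ρ̂(σ ⊕ 0) = h(ρ(σ)), ρ̂(0 ⊕ V) = V, and bracket ⟦σ₁⊕0, σ₂⊕0⟧ = ⟦σ₁,σ₂⟧^A ⊕ K(ρ(σ₁),ρ(σ₂)), ⟦σ₁⊕0, 0⊕V₂⟧ = 0 ⊕ [h(ρ(σ₁)),V₂], ⟦0⊕V₁, 0⊕V₂⟧ = 0 ⊕ [V₁,V₂], the anchor is compatible with the bracket: ρ̂(⟦σ̂₁,σ̂₂⟧) = [ρ̂(σ̂₁), ρ̂(σ̂₂)] for all sections σ̂₁, σ̂₂. -/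
import Mathlib


/-- On the Lie algebroid `Â = p*A ⊕ Vp` with anchor
`ρ̂(σ ⊕ 0) = h(ρ(σ))`, `ρ̂(0 ⊕ V) = V`, and bracket
`⟦σ₁⊕0, σ₂⊕0⟧ = ⟦σ₁,σ₂⟧^A ⊕ K(ρ(σ₁),ρ(σ₂))`,
`⟦σ₁⊕0, 0⊕V₂⟧ = 0 ⊕ [h(ρ(σ₁)),V₂]`, `⟦0⊕V₁, 0⊕V₂⟧ = 0 ⊕ [V₁,V₂]`,
the anchor is compatible with the bracket: `ρ̂(⟦σ̂₁,σ̂₂⟧) = [ρ̂(σ̂₁), ρ̂(σ̂₂)]`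
for all sections `σ̂₁, σ̂₂`.

Here `g = Γ(A)`, `XM = X(M)`, `XMbar = X(M̄)` are Lie rings, `ρ : Γ(A) → X(M)` is a
Lie algebra morphism (the anchor of `A`), `h : X(M) → X(M̄)` is the horizontal lift
of an Ehresmann connection on `p`, with curvature `K(X₁,X₂) = [h X₁, h X₂] − h [X₁,X₂]`,
and `V₁, V₂` are vertical vector fields.  A section `σ̂ = σ ⊕ V` of `Â` has anchor
`ρ̂(σ̂) = h(ρ(σ)) + V`, and the bracket of two such sections, obtained from the
relations above by the Leibniz extension, is
`⟦σ₁⊕V₁, σ₂⊕V₂⟧ = ⟦σ₁,σ₂⟧ ⊕ (K(ρσ₁,ρσ₂) + [h(ρσ₁),V₂] − [h(ρσ₂),V₁] + [V₁,V₂])`. -/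
theorem anchor_bracket_compatible_hatA
    {g XM XMbar : Type*} [LieRing g] [LieRing XM] [LieRing XMbar]
    (ρ : g → XM) (hρ : ∀ x y : g, ρ ⁅x, y⁆ = ⁅ρ x, ρ y⁆)
    (h : XM → XMbar) :
    ∀ (σ₁ σ₂ : g) (V₁ V₂ : XMbar),
      h (ρ ⁅σ₁, σ₂⁆)
          + ((⁅h (ρ σ₁), h (ρ σ₂)⁆ - h ⁅ρ σ₁, ρ σ₂⁆)   -- K(ρσ₁, ρσ₂)
              + ⁅h (ρ σ₁), V₂⁆ - ⁅h (ρ σ₂), V₁⁆ + ⁅V₁, V₂⁆)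
        = ⁅h (ρ σ₁) + V₁, h (ρ σ₂) + V₂⁆ := by
  intro σ₁ σ₂ V₁ V₂
  rw [hρ]
  simp [lie_add, add_lie]
  rw [← lie_skew V₁ (h (ρ σ₂))]
  abel
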